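/- Let X₀ and X₁ be Banach lattices of measurable functions on a common measure space (Ω,Σ,μ) and let 1 < p < ∞. For a measurable function f : Ω → ℝ, one has f ∈ X₀^(p)+X₁^(p) if and only if |f|^p ∈ X₀+X₁. -/

import Mathlib

open MeasureTheory

/-- A Banach lattice of (a.e.-equivalence classes of) real-valued measurable
functions on a measure space `(Ω, μ)`: a linear subspace of `Ω →ₘ[μ] ℝ` with a complete
norm satisfying the lattice (ideal) property. -/
structure BanachFunctionLattice (Ω : Type*) [MeasurableSpace Ω] (μ : MeasureTheory.Measure Ω) where
  carrier : Set (Ω →ₘ[μ] ℝ)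
  norm : (Ω →ₘ[μ] ℝ) → ℝ
  zero_mem : 0 ∈ carrier
  add_mem : ∀ {f g}, f ∈ carrier → g ∈ carrier → f + g ∈ carrier
  smul_mem : ∀ (c : ℝ) {f}, f ∈ carrier → c • f ∈ carrier
  norm_nonneg : ∀ f ∈ carrier, 0 ≤ norm f
  norm_eq_zero_iff : ∀ f ∈ carrier, (norm f = 0 ↔ f = 0)
  norm_add_le : ∀ f ∈ carrier, ∀ g ∈ carrier, norm (f + g) ≤ norm f + norm g
  norm_smul : ∀ (c : ℝ), ∀ f ∈ carrier, norm (c • f) = |c| * norm f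
  ideal_mem : ∀ f ∈ carrier, ∀ g : (Ω →ₘ[μ] ℝ), |g| ≤ |f| → g ∈ carrier
  ideal_norm_le : ∀ f ∈ carrier, ∀ g : (Ω →ₘ[μ] ℝ), |g| ≤ |f| → norm g ≤ norm f
  complete : ∀ u : ℕ → (Ω →ₘ[μ] ℝ), (∀ n, u n ∈ carrier) →
    (∀ ε > 0, ∃ N, ∀ m ≥ N, ∀ n ≥ N, norm (u m - u n) < ε) →
    ∃ f ∈ carrier, ∀ ε > 0, ∃ N, ∀ n ≥ N, norm (u n - f) < ε

variable {Ω : Type*} [MeasurableSpace Ω] {μ : MeasureTheory.Measure Ω}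

/-- The a.e.-equivalence class of `ω ↦ |f ω| ^ p` (real power). -/
noncomputable def absRpow (p : ℝ) (f : Ω →ₘ[μ] ℝ) : Ω →ₘ[μ] ℝ :=
  AEEqFun.mk (fun ω => |f ω| ^ p)
    (((by measurability : Measurable fun x : ℝ => |x| ^ p).comp_aemeasurable
      f.aemeasurable).aestronglyMeasurable)

/-- A (not necessarily complete) normed function space: the data of a carrier and a norm.
Used to speak about `p`-convexifications without re-proving all the axioms. -/
structure FunctionSpace (Ω : Type*) [MeasurableSpace Ω] (μ : MeasureTheory.Measure Ω) where
  carrier : Set (Ω →ₘ[μ] ℝ)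
  norm : (Ω →ₘ[μ] ℝ) → ℝ

/-- The carrier-and-norm data underlying a Banach function lattice. -/
def BanachFunctionLattice.toFunctionSpace (X : BanachFunctionLattice Ω μ) :
    FunctionSpace Ω μ := ⟨X.carrier, X.norm⟩

/-- The `p`-convexification `X^(p)`: all `f` with `|f|^p ∈ X`, with norm `‖|f|^p‖_X^(1/p)`. -/
noncomputable def pConv (X : BanachFunctionLattice Ω μ) (p : ℝ) : FunctionSpace Ω μ where
  carrier := {f | absRpow p f ∈ X.carrier}
  norm := fun f => (X.norm (absRpow p f)) ^ (1 / p)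

/-- The sum space `X₀ + X₁` (as a set). -/
def sumSet (A₀ A₁ : FunctionSpace Ω μ) : Set (Ω →ₘ[μ] ℝ) :=
  {f | ∃ a₀ ∈ A₀.carrier, ∃ a₁ ∈ A₁.carrier, f = a₀ + a₁}

/-- The Peetre `K`-functional `K(t, f; A₀, A₁)`. -/
noncomputable def Kfun (A₀ A₁ : FunctionSpace Ω μ) (t : ℝ) (f : Ω →ₘ[μ] ℝ) : ℝ :=
  sInf {r | ∃ a₀ ∈ A₀.carrier, ∃ a₁ ∈ A₁.carrier,
    f = a₀ + a₁ ∧ r = A₀.norm a₀ + t * A₁.norm a₁}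

/-- The norm of the sum space `X₀ + X₁`, namely `K(1, ·)`. -/
noncomputable def sumNorm (A₀ A₁ : FunctionSpace Ω μ) (f : Ω →ₘ[μ] ℝ) : ℝ :=
  Kfun A₀ A₁ 1 f

/-- The functional `D(t, f; A₀, A₁)`, the analogue of the `K`-functional restricted to
disjointly supported decompositions. -/
noncomputable def Dfun (A₀ A₁ : FunctionSpace Ω μ) (t : ℝ) (f : Ω →ₘ[μ] ℝ) : ℝ :=
  sInf {r | ∃ a₀ ∈ A₀.carrier, ∃ a₁ ∈ A₁.carrier,
    f = a₀ + a₁ ∧ a₀ * a₁ = 0 ∧ r = A₀.norm a₀ + t * A₁.norm a₁}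

/-- `T : (A₀, A₁) → (A₀, A₁)` is a bounded linear operator: `T` is linear on `A₀ + A₁`
and its restriction to each `Aⱼ` is a bounded operator from `Aⱼ` into itself. -/
def IsBoundedCoupleOperator (A₀ A₁ : FunctionSpace Ω μ) (T : (Ω →ₘ[μ] ℝ) → (Ω →ₘ[μ] ℝ)) :
    Prop :=
  (∀ f ∈ sumSet A₀ A₁, ∀ g ∈ sumSet A₀ A₁, T (f + g) = T f + T g) ∧
  (∀ (c : ℝ), ∀ f ∈ sumSet A₀ A₁, T (c • f) = c • T f) ∧
  (∀ f ∈ A₀.carrier, T f ∈ A₀.carrier) ∧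
  (∀ f ∈ A₁.carrier, T f ∈ A₁.carrier) ∧
  (∃ C₀ : ℝ, ∀ f ∈ A₀.carrier, A₀.norm (T f) ≤ C₀ * A₀.norm f) ∧
  (∃ C₁ : ℝ, ∀ f ∈ A₁.carrier, A₁.norm (T f) ≤ C₁ * A₁.norm f)

/-- `‖T‖_{Aⱼ → Aⱼ} ≤ C` for `j = 0, 1`. -/
def CoupleOperatorNormLE (A₀ A₁ : FunctionSpace Ω μ) (T : (Ω →ₘ[μ] ℝ) → (Ω →ₘ[μ] ℝ))
    (C : ℝ) : Prop :=
  (∀ f ∈ A₀.carrier, A₀.norm (T f) ≤ C * A₀.norm f) ∧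
  (∀ f ∈ A₁.carrier, A₁.norm (T f) ≤ C * A₁.norm f)

/-- `T` is a positive operator on `A₀ + A₁`. -/
def IsPositiveOn (A₀ A₁ : FunctionSpace Ω μ) (T : (Ω →ₘ[μ] ℝ) → (Ω →ₘ[μ] ℝ)) : Prop :=
  ∀ h ∈ sumSet A₀ A₁, 0 ≤ h → 0 ≤ T h

/-- `(A₀, A₁)` is a Calderón couple. -/
def IsCalderonCouple (A₀ A₁ : FunctionSpace Ω μ) : Prop :=
  ∀ f ∈ sumSet A₀ A₁, ∀ g ∈ sumSet A₀ A₁,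
    (∀ t > 0, Kfun A₀ A₁ t g ≤ Kfun A₀ A₁ t f) →
    ∃ T, IsBoundedCoupleOperator A₀ A₁ T ∧ T f = g

/-- `(A₀, A₁)` is a `C`-Calderón couple. -/
def IsCCalderonCouple (A₀ A₁ : FunctionSpace Ω μ) (C : ℝ) : Prop :=
  ∀ f ∈ sumSet A₀ A₁, ∀ g ∈ sumSet A₀ A₁,
    (∀ t > 0, Kfun A₀ A₁ t g ≤ Kfun A₀ A₁ t f) →
    ∃ T, IsBoundedCoupleOperator A₀ A₁ T ∧ T f = g ∧ CoupleOperatorNormLE A₀ A₁ T C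

/-- `(A₀, A₁)` is a positive Calderón couple. -/
def IsPositiveCalderonCouple (A₀ A₁ : FunctionSpace Ω μ) : Prop :=
  ∀ f ∈ sumSet A₀ A₁, ∀ g ∈ sumSet A₀ A₁, 0 ≤ f → 0 ≤ g →
    (∀ t > 0, Kfun A₀ A₁ t g ≤ Kfun A₀ A₁ t f) →
    ∃ T, IsBoundedCoupleOperator A₀ A₁ T ∧ IsPositiveOn A₀ A₁ T ∧ T f = g

/-- `(A₀, A₁)` is a positive `C`-Calderón couple. -/
def IsPositiveCCalderonCouple (A₀ A₁ : FunctionSpace Ω μ) (C : ℝ) : Prop :=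
  ∀ f ∈ sumSet A₀ A₁, ∀ g ∈ sumSet A₀ A₁, 0 ≤ f → 0 ≤ g →
    (∀ t > 0, Kfun A₀ A₁ t g ≤ Kfun A₀ A₁ t f) →
    ∃ T, IsBoundedCoupleOperator A₀ A₁ T ∧ IsPositiveOn A₀ A₁ T ∧ T f = g ∧
      CoupleOperatorNormLE A₀ A₁ T C

/-- A set `S` of (classes of) measurable functions has the Least Upper Bound Property:
every nonempty subset of `S` bounded above by an element of `S` has a least upper bound
in `S` (for the a.e. pointwise order). -/
def HasLUBP (S : Set (Ω →ₘ[μ] ℝ)) : Prop :=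
  ∀ A ⊆ S, A.Nonempty → (∃ b ∈ S, ∀ a ∈ A, a ≤ b) →
    ∃ y ∈ S, (∀ a ∈ A, a ≤ y) ∧ ∀ z ∈ S, (∀ a ∈ A, a ≤ z) → y ≤ z

/-!
Both directions rest on one pointwise decomposition: if `|f| ^ q ≤ |u| + |v|` with `q ≥ 1`,
truncating `f` at height `|u| ^ (1 / q)` writes `f = a + b` with `|a| ^ q ≤ |u|` and
`|b| ^ q ≤ |v|`, the latter because `t ↦ t ^ q` is superadditive. For `⇐` apply it with `q = p`
to `|f| ^ p = b₀ + b₁`; for `⇒` apply it with `q = 1` to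
`|a₀ + a₁| ^ p ≤ 2 ^ (p - 1) (|a₀| ^ p + |a₁| ^ p)`. The ideal property of `X₀` and `X₁` then
puts the pieces in the right spaces.
-/

namespace Real

lemma abs_add_rpow_le {x y p : ℝ} (hp : 1 ≤ p) :
    |x + y| ^ p ≤ 2 ^ (p - 1) * (|x| ^ p + |y| ^ p) :=
  calc |x + y| ^ p ≤ (|x| + |y|) ^ p :=
        rpow_le_rpow (abs_nonneg _) (abs_add_le x y) (by linarith)
    _ ≤ 2 ^ (p - 1) * (|x| ^ p + |y| ^ p) := by
        exact_mod_cast NNReal.rpow_add_le_mul_rpow_add_rpow ⟨|x|, abs_nonneg x⟩ ⟨|y|, abs_nonneg y⟩ hp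

lemma sub_rpow_le_rpow_sub_rpow {x y p : ℝ} (hy : 0 ≤ y) (hyx : y ≤ x) (hp : 1 ≤ p) :
    (x - y) ^ p ≤ x ^ p - y ^ p := by
  have := add_rpow_le_rpow_add (sub_nonneg.2 hyx) hy hp
  rw [sub_add_cancel] at this
  linarith

lemma abs_max_neg_min_le (x : ℝ) {r : ℝ} (hr : 0 ≤ r) : |max (-r) (min x r)| ≤ r :=
  abs_le.2 ⟨le_max_left _ _, max_le (by linarith) (min_le_right _ _)⟩

lemma abs_sub_max_neg_min (x : ℝ) {r : ℝ} (hr : 0 ≤ r) :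
    |x - max (-r) (min x r)| = max (|x| - r) 0 := by
  grind

lemma abs_rpow_le_of_abs_rpow_le_add {x u v q : ℝ} (hu : 0 ≤ u) (hv : 0 ≤ v) (hq : 1 ≤ q)
    (h : |x| ^ q ≤ u + v) :
    |max (-u ^ (1 / q)) (min x (u ^ (1 / q)))| ^ q ≤ u ∧
      |x - max (-u ^ (1 / q)) (min x (u ^ (1 / q)))| ^ q ≤ v := by
  have hq0 : q ≠ 0 := by positivity
  set r := u ^ (1 / q)
  have hr : 0 ≤ r := by positivity
  have hru : r ^ q = u := by rw [← rpow_mul hu, one_div_mul_cancel hq0, rpow_one]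
  refine ⟨hru ▸ rpow_le_rpow (abs_nonneg _) (abs_max_neg_min_le x hr) (by positivity), ?_⟩
  rw [abs_sub_max_neg_min x hr]
  rcases le_total |x| r with hxr | hrx
  · rw [max_eq_right (by linarith), zero_rpow hq0]
    exact hv
  · rw [max_eq_left (by linarith)]
    calc (|x| - r) ^ q ≤ |x| ^ q - r ^ q := sub_rpow_le_rpow_sub_rpow hr hrx hq
      _ ≤ v := by linarith

end Real

namespace MeasureTheory.AEEqFun

variable {Ω : Type*} [MeasurableSpace Ω] {μ : Measure Ω}

lemma coeFn_absRpow (p : ℝ) (f : Ω →ₘ[μ] ℝ) : ⇑(absRpow p f) =ᵐ[μ] fun ω => |f ω| ^ p :=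
  coeFn_mk _ _

lemma abs_absRpow (p : ℝ) (f : Ω →ₘ[μ] ℝ) : |absRpow p f| = absRpow p f := by
  ext1
  filter_upwards [coeFn_abs (absRpow p f), coeFn_absRpow p f] with ω habs hf
  rw [habs, hf]
  exact abs_of_nonneg (by positivity)

lemma absRpow_one (f : Ω →ₘ[μ] ℝ) : absRpow 1 f = |f| := by
  ext1
  filter_upwards [coeFn_abs f, coeFn_absRpow 1 f] with ω habs hf
  rw [habs, hf, Real.rpow_one]

lemma exists_add_eq_absRpow_le {q : ℝ} (hq : 1 ≤ q) {f u v : Ω →ₘ[μ] ℝ}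
    (h : ∀ᵐ ω ∂μ, |f ω| ^ q ≤ |u ω| + |v ω|) :
    ∃ a b : Ω →ₘ[μ] ℝ, f = a + b ∧ absRpow q a ≤ |u| ∧ absRpow q b ≤ |v| := by
  set r := absRpow (1 / q) u
  set a := -r ⊔ (f ⊓ r)
  have key : ∀ᵐ ω ∂μ, |a ω| ^ q ≤ |u ω| ∧ |(f - a) ω| ^ q ≤ |v ω| := by
    filter_upwards [h, coeFn_sup (-r) (f ⊓ r), coeFn_inf f r, coeFn_neg r,
      coeFn_absRpow (1 / q) u, coeFn_sub f a] with ω hω ha hinf hneg hr hsub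
    rw [hsub, Pi.sub_apply, ha, hinf, hneg, Pi.neg_apply, hr]
    exact Real.abs_rpow_le_of_abs_rpow_le_add (abs_nonneg _) (abs_nonneg _) hq hω
  refine ⟨a, f - a, (add_sub_cancel a f).symm, ?_, ?_⟩ <;> rw [← coeFn_le]
  · filter_upwards [key, coeFn_absRpow q a, coeFn_abs u] with ω hω ha hu
    rw [ha, hu]
    exact hω.1
  · filter_upwards [key, coeFn_absRpow q (f - a), coeFn_abs v] with ω hω hb hv
    rw [hb, hv]
    exact hω.2

end MeasureTheory.AEEqFun

namespace BanachFunctionLattice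

variable {Ω : Type*} [MeasurableSpace Ω] {μ : Measure Ω} (X₀ X₁ : BanachFunctionLattice Ω μ)
  {u v : Ω →ₘ[μ] ℝ}

open AEEqFun

lemma mem_sumSet_of_abs_le_add (hu : u ∈ X₀.carrier) (hv : v ∈ X₁.carrier) {g : Ω →ₘ[μ] ℝ}
    (h : ∀ᵐ ω ∂μ, |g ω| ≤ |u ω| + |v ω|) :
    g ∈ sumSet X₀.toFunctionSpace X₁.toFunctionSpace := by
  obtain ⟨a, b, rfl, ha, hb⟩ :=
    exists_add_eq_absRpow_le le_rfl (by simpa only [Real.rpow_one] using h)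
  rw [absRpow_one] at ha hb
  exact ⟨a, X₀.ideal_mem u hu a ha, b, X₁.ideal_mem v hv b hb, rfl⟩

lemma mem_sumSet_pConv_of_abs_rpow_le_add {p : ℝ} (hp : 1 ≤ p) (hu : u ∈ X₀.carrier)
    (hv : v ∈ X₁.carrier) {f : Ω →ₘ[μ] ℝ} (h : ∀ᵐ ω ∂μ, |f ω| ^ p ≤ |u ω| + |v ω|) :
    f ∈ sumSet (pConv X₀ p) (pConv X₁ p) := by
  obtain ⟨a, b, rfl, ha, hb⟩ := exists_add_eq_absRpow_le hp h
  exact ⟨a, X₀.ideal_mem u hu _ ((abs_absRpow p a).trans_le ha),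
    b, X₁.ideal_mem v hv _ ((abs_absRpow p b).trans_le hb), rfl⟩

lemma absRpow_add_mem_sumSet {p : ℝ} (hp : 1 ≤ p) {a₀ a₁ : Ω →ₘ[μ] ℝ}
    (h₀ : absRpow p a₀ ∈ X₀.carrier) (h₁ : absRpow p a₁ ∈ X₁.carrier) :
    absRpow p (a₀ + a₁) ∈ sumSet X₀.toFunctionSpace X₁.toFunctionSpace := by
  refine mem_sumSet_of_abs_le_add X₀ X₁ (X₀.smul_mem ((2 : ℝ) ^ (p - 1)) h₀)
    (X₁.smul_mem ((2 : ℝ) ^ (p - 1)) h₁) ?_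
  filter_upwards [coeFn_absRpow p (a₀ + a₁), coeFn_add a₀ a₁,
    coeFn_smul ((2 : ℝ) ^ (p - 1)) (absRpow p a₀), coeFn_absRpow p a₀,
    coeFn_smul ((2 : ℝ) ^ (p - 1)) (absRpow p a₁), coeFn_absRpow p a₁]
    with ω h h_add h_smul₀ hω₀ h_smul₁ hω₁
  calc |absRpow p (a₀ + a₁) ω| = |a₀ ω + a₁ ω| ^ p := by
        rw [h, h_add, Pi.add_apply, abs_of_nonneg (by positivity)]
    _ ≤ 2 ^ (p - 1) * |a₀ ω| ^ p + 2 ^ (p - 1) * |a₁ ω| ^ p :=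
        (Real.abs_add_rpow_le hp).trans_eq (mul_add _ _ _)
    _ = _ := by
        rw [h_smul₀, h_smul₁, Pi.smul_apply, Pi.smul_apply, hω₀, hω₁, smul_eq_mul, smul_eq_mul]
        congr 1 <;> exact (abs_of_nonneg (by positivity)).symm

end BanachFunctionLattice

open AEEqFun BanachFunctionLattice in
/-- For `1 < p < ∞` and a measurable `f`, one has
`f ∈ X₀^(p) + X₁^(p)` if and only if `|f|^p ∈ X₀ + X₁`. -/
theorem mem_sumSet_pConv_iff
    (X₀ X₁ : BanachFunctionLattice Ω μ) (p : ℝ) (hp : 1 < p) (f : Ω →ₘ[μ] ℝ) :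
    f ∈ sumSet (pConv X₀ p) (pConv X₁ p) ↔
      absRpow p f ∈ sumSet X₀.toFunctionSpace X₁.toFunctionSpace := by
  constructor
  · rintro ⟨a₀, h₀, a₁, h₁, rfl⟩
    exact absRpow_add_mem_sumSet X₀ X₁ hp.le h₀ h₁
  · rintro ⟨b₀, h₀, b₁, h₁, hsum⟩
    refine mem_sumSet_pConv_of_abs_rpow_le_add X₀ X₁ hp.le h₀ h₁ ?_
    filter_upwards [hsum ▸ coeFn_absRpow p f, coeFn_add b₀ b₁] with ω h h_add
    rw [← h, h_add]
    exact add_le_add (le_abs_self _) (le_abs_self _)
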